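/- Let X be a nonempty finite set, let f : X → ℝ^m, and let u ∈ ℝ^m satisfy u_i < f_i(x) for all x ∈ X and all i. If x* ∈ X is Pareto optimal, then there exist weights w_i > 0 and a real ε > 0 such that x* minimizes the augmented weighted Tchebychev value max_i w_i (f_i(x) − u_i) + ε Σ_i w_i (f_i(x) − u_i) over X. (In particular, one may take w_i = 1/(f_i(x*) − u_i) and any sufficiently small ε > 0.) -/
import Mathlib


/-- Completeness of the augmented weighted Tchebychev scalarization: every Pareto
optimal point minimizes the scalarization for some positive weights and some
sufficiently small positive augmentation parameter. -/
theorem pareto_is_augmented_tchebychev_minimizer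
    {X : Type*} [Fintype X] [Nonempty X] {m : ℕ} (hm : 0 < m)
    (f : X → Fin m → ℝ) (u : Fin m → ℝ)
    (hu : ∀ (x : X) (i : Fin m), u i < f x i)
    (xstar : X)
    (hpareto : ¬ ∃ x : X, (∀ i, f x i ≤ f xstar i) ∧ ∃ j, f x j < f xstar j) :
    ∃ (w : Fin m → ℝ) (ε : ℝ), (∀ i, 0 < w i) ∧ 0 < ε ∧
      ∀ x : X,
        Finset.univ.sup' (Finset.univ_nonempty_iff.mpr (Fin.pos_iff_nonempty.mp hm))
            (fun i => w i * (f xstar i - u i))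
          + ε * ∑ i, w i * (f xstar i - u i)
        ≤ Finset.univ.sup' (Finset.univ_nonempty_iff.mpr (Fin.pos_iff_nonempty.mp hm))
            (fun i => w i * (f x i - u i))
          + ε * ∑ i, w i * (f x i - u i) := by
  classical
  have hN : (Finset.univ : Finset (Fin m)).Nonempty :=
    Finset.univ_nonempty_iff.mpr (Fin.pos_iff_nonempty.mp hm)
  set w : Fin m → ℝ := fun i => (f xstar i - u i)⁻¹ with hw
  have hwpos : ∀ i, 0 < w i := fun i => inv_pos.mpr (sub_pos.mpr (hu xstar i))
  have hgstar : ∀ i, w i * (f xstar i - u i) = 1 := fun i =>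
    inv_mul_cancel₀ (ne_of_gt (sub_pos.mpr (hu xstar i)))
  set s : X → ℝ := fun x => Finset.univ.sup' hN (fun i => w i * (f x i - u i)) with hs
  have hgpos : ∀ (x : X) (i : Fin m), 0 < w i * (f x i - u i) := fun x i =>
    mul_pos (hwpos i) (sub_pos.mpr (hu x i))
  have hsum_pos : ∀ x : X, 0 < ∑ i, w i * (f x i - u i) := fun x =>
    Finset.sum_pos (fun i _ => hgpos x i) hN
  have key : ∀ x : X, (∀ i, f xstar i ≤ f x i) ∨ 1 < s x := by
    intro x
    by_cases h : ∀ i, f x i ≤ f xstar i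
    · left
      intro i
      by_contra hlt
      push_neg at hlt
      exact hpareto ⟨x, h, i, hlt⟩
    · right
      push_neg at h
      obtain ⟨i, hi⟩ := h
      have h1 : 1 < w i * (f x i - u i) := by
        have := (mul_lt_mul_iff_right₀ (hwpos i)).mpr (show f xstar i - u i < f x i - u i by linarith)
        rw [hgstar i] at this; exact this
      exact lt_of_lt_of_le h1 (Finset.le_sup' (fun i => w i * (f x i - u i)) (Finset.mem_univ i))
  set hfun : X → ℝ := fun x => if 1 < s x then (s x - 1) / m else 1 with hhdef
  have hhpos : ∀ x : X, 0 < hfun x := by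
    intro x
    simp only [hhdef]
    split
    · apply div_pos (by linarith) (by exact_mod_cast hm)
    · norm_num
  have hXne : (Finset.univ : Finset X).Nonempty := Finset.univ_nonempty
  refine ⟨w, Finset.univ.inf' hXne hfun, hwpos, ?_, ?_⟩
  · exact (Finset.lt_inf'_iff hXne).mpr (fun x _ => hhpos x)
  · intro x
    set ε := Finset.univ.inf' hXne hfun with hε
    have hεpos : 0 < ε := (Finset.lt_inf'_iff hXne).mpr (fun x _ => hhpos x)
    have hεle : ε ≤ hfun x := Finset.inf'_le _ (Finset.mem_univ x)
    have hsupstar : Finset.univ.sup' hN (fun i => w i * (f xstar i - u i)) = 1 := by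
      rw [Finset.sup'_congr hN rfl (fun i _ => hgstar i)]
      exact Finset.sup'_const hN 1
    have hsumstar : ∑ i, w i * (f xstar i - u i) = (m : ℝ) := by
      rw [Finset.sum_congr rfl (fun i _ => hgstar i)]
      simp
    rw [hsupstar, hsumstar]
    rcases key x with hall | hlt
    · have hsx : 1 ≤ s x := by
        have i0 : Fin m := ⟨0, hm⟩
        have h1 : 1 ≤ w i0 * (f x i0 - u i0) := by
          rw [← hgstar i0]
          exact mul_le_mul_of_nonneg_left (by linarith [hall i0]) (le_of_lt (hwpos i0))
        exact le_trans h1 (Finset.le_sup' (fun i => w i * (f x i - u i)) (Finset.mem_univ i0))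
      have hsum : (m : ℝ) ≤ ∑ i, w i * (f x i - u i) := by
        calc (m : ℝ) = ∑ _i : Fin m, (1 : ℝ) := by simp
        _ ≤ ∑ i, w i * (f x i - u i) := by
            apply Finset.sum_le_sum
            intro i _
            rw [← hgstar i]
            exact mul_le_mul_of_nonneg_left (by linarith [hall i]) (le_of_lt (hwpos i))
      nlinarith [hεpos]
    · have hεm : ε * m ≤ s x - 1 := by
        have : hfun x = (s x - 1) / m := by simp [hhdef, hlt]
        rw [this] at hεle
        have hm' : (0 : ℝ) < m := by exact_mod_cast hm
        calc ε * m ≤ (s x - 1) / m * m := by nlinarith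
        _ = s x - 1 := by field_simp
      have := hsum_pos x
      nlinarith [hεpos]
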